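/- Let d = diag(1, p^{-1}, ..., p^{-1}) ∈ GL_n(ℚ_p). Then I d I = ⋃_{E ∈ {0,1,...,p-1}^{n-1}} x_E I, and the right cosets x_E I, for E ranging over {0,1,...,p-1}^{n-1}, are pairwise disjoint. In particular the double coset I d I (underlying the Hecke operator U_p) is the disjoint union of exactly p^{n-1} right I-cosets. -/

import Mathlib

open Pointwise

/-- The Iwahori subgroup of `GL_n(ℚ_p)`: matrices with entries in `ℤ_p`, determinant a
`p`-adic unit, and entries strictly below the diagonal in `pℤ_p`. -/
def Iwahori (p : ℕ) [Fact p.Prime] (n : ℕ) :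
    Set (Matrix.GeneralLinearGroup (Fin n) ℚ_[p]) :=
  {g | (∀ i j : Fin n, ‖(g : Matrix (Fin n) (Fin n) ℚ_[p]) i j‖ ≤ 1) ∧
    ‖(g : Matrix (Fin n) (Fin n) ℚ_[p]).det‖ = 1 ∧
    ∀ i j : Fin n, j < i → ‖(g : Matrix (Fin n) (Fin n) ℚ_[p]) i j‖ < 1}

/-- The diagonal matrix `diag(p^{a_1}, ..., p^{a_n})` as an element of `GL_n(ℚ_p)`. -/
noncomputable def dGL (p : ℕ) [Fact p.Prime] (n : ℕ) (a : Fin n → ℤ) :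
    Matrix.GeneralLinearGroup (Fin n) ℚ_[p] :=
  Matrix.GeneralLinearGroup.mkOfDetNeZero
    (Matrix.diagonal fun i => (p : ℚ_[p]) ^ (a i))
    (by
      rw [Matrix.det_diagonal]
      exact Finset.prod_ne_zero_iff.2 fun i _ =>
        zpow_ne_zero _ (Nat.cast_ne_zero.mpr (Fact.out : p.Prime).ne_zero))

/-- The matrix `x_E = [[1, p⁻¹E], [0, p⁻¹·Id]]` (here size `(n+1) × (n+1)`, with
`E ∈ ℤⁿ` filling the rest of the first row, scaled by `p⁻¹`). -/
noncomputable def xMat (p : ℕ) [Fact p.Prime] (n : ℕ) (E : Fin n → ℤ) :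
    Matrix (Fin (n + 1)) (Fin (n + 1)) ℚ_[p] :=
  Matrix.of fun i j =>
    if i = 0 then
      (if h : j = 0 then 1 else ((p : ℚ_[p]))⁻¹ * ((E (j.pred h) : ℤ) : ℚ_[p]))
    else if i = j then ((p : ℚ_[p]))⁻¹ else 0

/-- The matrix `x_E` as an element of `GL_{n+1}(ℚ_p)`. -/
noncomputable def xGL (p : ℕ) [Fact p.Prime] (n : ℕ) (E : Fin n → ℤ) :
    Matrix.GeneralLinearGroup (Fin (n + 1)) ℚ_[p] :=
  Matrix.GeneralLinearGroup.mkOfDetNeZero (xMat p n E)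
    (by
      have hp : (p : ℚ_[p]) ≠ 0 := Nat.cast_ne_zero.mpr (Fact.out : p.Prime).ne_zero
      have htri : (xMat p n E).BlockTriangular id := by
        intro i j hij
        have hi : i ≠ 0 := by
          rintro rfl
          exact absurd hij (by simp)
        have hij' : ¬ i = j := fun h => hij.ne h.symm
        simp only [xMat, Matrix.of_apply, if_neg hi, if_neg hij']
      rw [Matrix.det_of_upperTriangular htri]
      refine Finset.prod_ne_zero_iff.2 fun i _ => ?_
      by_cases hi : i = 0
      · subst hi; simp [xMat]
      · simp only [xMat, Matrix.of_apply, if_neg hi, if_pos rfl]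
        exact inv_ne_zero hp)

/-!
Write `x_E = u_E d` with `u_E = [[1, E], [0, 1]] ∈ I`. Conjugation by `d` divides the first row
of a matrix by `p` and multiplies its first column by `p`, so for `g ∈ I` we have `d⁻¹ g d ∈ I`
exactly when the first row of `g` vanishes mod `p` off the diagonal. For `a ∈ I` the lower right
block of `a` is invertible mod `p`, so some `E ∈ {0, …, p-1}ⁿ` makes the first row of `u_E⁻¹ a`
vanish mod `p` off the diagonal; then `a d = x_E (d⁻¹ u_E⁻¹ a d) ∈ x_E I`. Conversely
`x_{E'}⁻¹ x_E = d⁻¹ u_{E-E'} d` lies in `I` only if `p ∣ E - E'`, which gives disjointness.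
-/

open Matrix

section UnipotentRow

variable {K L : Type*} [CommRing K] [CommRing L] {n : ℕ}

/-- The matrix `[[1, c], [0, 1]]`. -/
def unipotentRow (c : Fin n → K) : Matrix (Fin (n + 1)) (Fin (n + 1)) K :=
  (1 : Matrix (Fin (n + 1)) (Fin (n + 1)) K).updateRow 0 (Fin.cons 1 c)

@[simp] lemma unipotentRow_zero_zero (c : Fin n → K) : unipotentRow c 0 0 = 1 := by
  simp [unipotentRow]

@[simp] lemma unipotentRow_zero_succ (c : Fin n → K) (j : Fin n) :
    unipotentRow c 0 j.succ = c j := by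
  simp [unipotentRow]

@[simp] lemma unipotentRow_succ (c : Fin n → K) (i : Fin n) (j : Fin (n + 1)) :
    unipotentRow c i.succ j = (1 : Matrix (Fin (n + 1)) (Fin (n + 1)) K) i.succ j :=
  congrFun (updateRow_ne i.succ_ne_zero) j

lemma unipotentRow_mul_apply_zero (c : Fin n → K) (M : Matrix (Fin (n + 1)) (Fin (n + 1)) K)
    (j : Fin (n + 1)) : (unipotentRow c * M) 0 j = M 0 j + ∑ k, c k * M k.succ j := by
  simp [mul_apply, Fin.sum_univ_succ]

lemma unipotentRow_mul_unipotentRow (c d : Fin n → K) :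
    unipotentRow c * unipotentRow d = unipotentRow (c + d) := by
  ext i j
  cases i using Fin.cases with
  | zero =>
    rw [unipotentRow_mul_apply_zero]
    cases j using Fin.cases <;> simp [one_apply, Fin.succ_ne_zero, add_comm]
  | succ i => simp [unipotentRow, updateRow_mul]

lemma unipotentRow_zero : unipotentRow (0 : Fin n → K) = 1 := by
  ext i j
  cases i using Fin.cases with
  | zero => cases j using Fin.cases <;> simp [one_apply, eq_comm, Fin.succ_ne_zero]
  | succ i => simp

lemma unipotentRow_map (f : K →+* L) (c : Fin n → K) :
    (unipotentRow c).map f = unipotentRow (f ∘ c) := by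
  ext i j
  cases i using Fin.cases with
  | zero => cases j using Fin.cases <;> simp
  | succ i => simp [one_apply]

lemma unipotentRow_isUpperTriangular (c : Fin n → K) : (unipotentRow c).IsUpperTriangular := by
  intro i j hji
  cases i using Fin.cases with
  | zero => exact absurd hji (Fin.not_lt_zero j)
  | succ i => simp [one_apply, (show i.succ ≠ j from fun h => (h ▸ hji).false)]

def unipotentRowGL (c : Fin n → K) : GL (Fin (n + 1)) K :=
  ⟨unipotentRow c, unipotentRow (-c),
    by rw [unipotentRow_mul_unipotentRow, add_neg_cancel, unipotentRow_zero],
    by rw [unipotentRow_mul_unipotentRow, neg_add_cancel, unipotentRow_zero]⟩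

@[simp] lemma coe_unipotentRowGL (c : Fin n → K) :
    (unipotentRowGL c : Matrix (Fin (n + 1)) (Fin (n + 1)) K) = unipotentRow c :=
  rfl

lemma unipotentRowGL_mul (c d : Fin n → K) :
    unipotentRowGL c * unipotentRowGL d = unipotentRowGL (c + d) :=
  Units.ext (unipotentRow_mul_unipotentRow c d)

lemma unipotentRowGL_inv (c : Fin n → K) : (unipotentRowGL c)⁻¹ = unipotentRowGL (-c) :=
  Units.ext rfl

lemma map_unipotentRowGL (f : K →+* L) (c : Fin n → K) :
    GeneralLinearGroup.map f (unipotentRowGL c) = unipotentRowGL (f ∘ c) :=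
  Units.ext (unipotentRow_map f c)

end UnipotentRow

section Iwahori

variable {p : ℕ} [Fact p.Prime] {m : ℕ}

lemma PadicInt.norm_lt_one_iff_toZMod_eq_zero (x : ℤ_[p]) :
    ‖x‖ < 1 ↔ PadicInt.toZMod x = 0 := by
  rw [PadicInt.norm_lt_one_iff_dvd, ← Ideal.mem_span_singleton,
    ← PadicInt.maximalIdeal_eq_span_p, ← PadicInt.ker_toZMod, RingHom.mem_ker]

lemma PadicInt.norm_det_map_coe (A : Matrix (Fin m) (Fin m) ℤ_[p]) :
    ‖(A.map PadicInt.Coe.ringHom).det‖ = ‖A.det‖ := by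
  rw [← RingHom.mapMatrix_apply, ← RingHom.map_det]
  rfl

lemma mem_Iwahori_iff (g : GL (Fin m) ℚ_[p]) :
    g ∈ Iwahori p m ↔ ∃ A : GL (Fin m) ℤ_[p],
      GeneralLinearGroup.map PadicInt.Coe.ringHom A = g ∧
        (GeneralLinearGroup.map PadicInt.toZMod A :
          Matrix (Fin m) (Fin m) (ZMod p)).IsUpperTriangular := by
  constructor
  · rintro ⟨hint, hdet, hlow⟩
    let A : Matrix (Fin m) (Fin m) ℤ_[p] := Matrix.of fun i j => ⟨g i j, hint i j⟩
    have hA : A.map PadicInt.Coe.ringHom = g := rfl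
    have hAdet : IsUnit A.det := by
      rw [PadicInt.isUnit_iff, ← PadicInt.norm_det_map_coe, hA, hdet]
    exact ⟨nonsingInvUnit A hAdet, Units.ext hA, fun i j hji =>
      (PadicInt.norm_lt_one_iff_toZMod_eq_zero _).1 (hlow i j hji)⟩
  · rintro ⟨A, rfl, hlow⟩
    refine ⟨fun i j => PadicInt.norm_le_one (A i j), ?_, fun i j hji => ?_⟩
    · exact (PadicInt.norm_det_map_coe (A : Matrix (Fin m) (Fin m) ℤ_[p])).trans
        (PadicInt.isUnit_iff.1 (isUnits_det_units A))
    · exact (PadicInt.norm_lt_one_iff_toZMod_eq_zero _).2 (hlow hji)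

def IwahoriSubgroup (p : ℕ) [Fact p.Prime] (m : ℕ) : Subgroup (GL (Fin m) ℚ_[p]) where
  carrier := Iwahori p m
  one_mem' := (mem_Iwahori_iff 1).2 ⟨1, map_one _, by simpa using blockTriangular_one⟩
  mul_mem' := by
    intro g h hg hh
    obtain ⟨A, rfl, hA⟩ := (mem_Iwahori_iff g).1 hg
    obtain ⟨B, rfl, hB⟩ := (mem_Iwahori_iff h).1 hh
    refine (mem_Iwahori_iff _).2 ⟨A * B, map_mul _ A B, ?_⟩
    rw [map_mul, Units.val_mul]
    exact hA.mul hB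
  inv_mem' := by
    intro g hg
    obtain ⟨A, rfl, hA⟩ := (mem_Iwahori_iff g).1 hg
    refine (mem_Iwahori_iff _).2 ⟨A⁻¹, map_inv _ A, ?_⟩
    rw [map_inv, coe_units_inv]
    exact blockTriangular_inv_of_blockTriangular hA

end Iwahori

section Conjugation

variable {p : ℕ} [Fact p.Prime]

lemma dGL_add (m : ℕ) (a b : Fin m → ℤ) : dGL p m (a + b) = dGL p m a * dGL p m b := by
  have hp : (p : ℚ_[p]) ≠ 0 := Nat.cast_ne_zero.2 (Fact.out : p.Prime).ne_zero
  ext : 1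
  simp [dGL, zpow_add₀ hp]

lemma dGL_inv (m : ℕ) (a : Fin m → ℤ) : (dGL p m a)⁻¹ = dGL p m (-a) :=
  inv_eq_of_mul_eq_one_right <| by
    rw [← dGL_add, add_neg_cancel]
    ext : 1
    simp [dGL]

lemma dGL_inv_mul_mul_dGL_apply {m : ℕ} (a : Fin m → ℤ) (g : GL (Fin m) ℚ_[p]) (i j : Fin m) :
    ((dGL p m a)⁻¹ * g * dGL p m a) i j = (p : ℚ_[p]) ^ (a j - a i) * g i j := by
  have hp : (p : ℚ_[p]) ≠ 0 := Nat.cast_ne_zero.2 (Fact.out : p.Prime).ne_zero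
  rw [dGL_inv, Units.val_mul, Units.val_mul]
  simp only [dGL, GeneralLinearGroup.val_mkOfDetNeZero, mul_diagonal, diagonal_mul,
    Pi.neg_apply, sub_eq_add_neg, zpow_add₀ hp, _root_.zpow_neg]
  ring

lemma Padic.norm_inv_p_mul_le_one_iff (x : ℚ_[p]) : ‖(p : ℚ_[p])⁻¹ * x‖ ≤ 1 ↔ ‖x‖ < 1 := by
  have hp : (0 : ℝ) < p := Nat.cast_pos.2 (Fact.out : p.Prime).pos
  rw [norm_mul, norm_inv, Padic.norm_p, inv_inv, ← le_div_iff₀' hp, one_div,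
    ← _root_.zpow_neg_one, Padic.norm_le_pow_iff_norm_lt_pow_add_one]
  norm_num

lemma Padic.norm_p_mul_lt_one {x : ℚ_[p]} (hx : ‖x‖ ≤ 1) : ‖(p : ℚ_[p]) * x‖ < 1 := by
  rw [norm_mul, Padic.norm_p]
  exact (mul_le_of_le_one_right (by positivity) hx).trans_lt
    (inv_lt_one_of_one_lt₀ (Nat.one_lt_cast.2 (Fact.out : p.Prime).one_lt))

noncomputable abbrev dUp (p : ℕ) [Fact p.Prime] (n : ℕ) : GL (Fin (n + 1)) ℚ_[p] :=
  dGL p (n + 1) fun i => if i = 0 then 0 else -1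

lemma dUp_conj_mem_Iwahori_iff {n : ℕ} {g : GL (Fin (n + 1)) ℚ_[p]}
    (hg : g ∈ Iwahori p (n + 1)) :
    (dUp p n)⁻¹ * g * dUp p n ∈ Iwahori p (n + 1) ↔ ∀ j : Fin n, ‖g 0 j.succ‖ < 1 := by
  have hconj := dGL_inv_mul_mul_dGL_apply (p := p) (fun i => if i = 0 then 0 else -1) g
  have h00 : ((dUp p n)⁻¹ * g * dUp p n) 0 0 = g 0 0 := by simp [hconj]
  have h0s : ∀ j : Fin n,
      ((dUp p n)⁻¹ * g * dUp p n) 0 j.succ = (p : ℚ_[p])⁻¹ * g 0 j.succ := by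
    simp [hconj]
  have hs0 : ∀ i : Fin n, ((dUp p n)⁻¹ * g * dUp p n) i.succ 0 = p * g i.succ 0 := by
    simp [hconj]
  have hss : ∀ i j : Fin n, ((dUp p n)⁻¹ * g * dUp p n) i.succ j.succ = g i.succ j.succ := by
    simp [hconj]
  obtain ⟨hint, hdet, hlow⟩ := hg
  constructor
  · intro h j
    simpa only [h0s, Padic.norm_inv_p_mul_le_one_iff] using h.1 0 j.succ
  refine fun h => ⟨fun i j => ?_, ?_, fun i j hji => ?_⟩
  · cases i using Fin.cases <;> cases j using Fin.cases
    · exact h00 ▸ hint 0 0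
    · exact (h0s _).symm ▸ (Padic.norm_inv_p_mul_le_one_iff _).2 (h _)
    · exact (hs0 _).symm ▸ (Padic.norm_p_mul_lt_one (hint _ _)).le
    · exact (hss _ _).symm ▸ hint _ _
  · rw [Units.val_mul, Units.val_mul, det_units_conj']
    exact hdet
  · cases i using Fin.cases with
    | zero => exact absurd hji (Fin.not_lt_zero j)
    | succ i =>
      cases j using Fin.cases with
      | zero => exact (hs0 _).symm ▸ Padic.norm_p_mul_lt_one (hint _ _)
      | succ j => exact (hss _ _).symm ▸ hlow _ _ hji

end Conjugation

section RowReduction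

lemma isUnit_submatrix_succ_of_isUpperTriangular {K : Type*} [CommRing K] {n : ℕ}
    {M : Matrix (Fin (n + 1)) (Fin (n + 1)) K} (hM : M.IsUpperTriangular) (hdet : IsUnit M.det) :
    IsUnit (M.submatrix Fin.succ Fin.succ) := by
  have hsub : (M.submatrix Fin.succ Fin.succ).IsUpperTriangular := fun i j hji =>
    hM (Fin.succ_lt_succ_iff.2 hji)
  have hsplit : M.det = M 0 0 * (M.submatrix Fin.succ Fin.succ).det := by
    rw [det_of_isUpperTriangular hM, Fin.prod_univ_succ, det_of_isUpperTriangular hsub]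
    rfl
  rw [isUnit_iff_isUnit_det]
  exact isUnit_of_mul_isUnit_right (hsplit ▸ hdet)

lemma exists_unipotentRowGL_inv_mul_apply_zero_succ_eq_zero {K : Type*} [CommRing K] {n : ℕ}
    (B : GL (Fin (n + 1)) K) (hB : (B : Matrix (Fin (n + 1)) (Fin (n + 1)) K).IsUpperTriangular) :
    ∃ v : Fin n → K, ∀ j : Fin n, ((unipotentRowGL v)⁻¹ * B) 0 j.succ = 0 := by
  obtain ⟨v, hv⟩ := vecMul_surjective_iff_isUnit.2
    (isUnit_submatrix_succ_of_isUpperTriangular hB (isUnits_det_units B)) fun j => B 0 j.succ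
  refine ⟨v, fun j => ?_⟩
  rw [unipotentRowGL_inv, Units.val_mul, coe_unipotentRowGL, unipotentRow_mul_apply_zero,
    ← congrFun hv j]
  simp [vecMul, dotProduct]

variable {p : ℕ} [Fact p.Prime] {n : ℕ}

lemma exists_unipotentRowGL_inv_mul_norm_lt_one {a : GL (Fin (n + 1)) ℚ_[p]}
    (ha : a ∈ Iwahori p (n + 1)) :
    ∃ E : Fin n → ℤ, (∀ j, 0 ≤ E j ∧ E j < p) ∧
      ∀ j : Fin n, ‖((unipotentRowGL fun k => (E k : ℚ_[p]))⁻¹ * a) 0 j.succ‖ < 1 := by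
  obtain ⟨A, rfl, hA⟩ := (mem_Iwahori_iff a).1 ha
  obtain ⟨v, hv⟩ := exists_unipotentRowGL_inv_mul_apply_zero_succ_eq_zero _ hA
  refine ⟨fun k => (v k).val, fun j => ⟨by positivity, Int.ofNat_lt.2 (v j).val_lt⟩, fun j => ?_⟩
  let u : GL (Fin (n + 1)) ℤ_[p] := unipotentRowGL fun k => ((v k).val : ℤ_[p])
  have hmapℚ : GeneralLinearGroup.map PadicInt.Coe.ringHom u =
      unipotentRowGL fun k => ((v k).val : ℚ_[p]) := by
    rw [map_unipotentRowGL]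
    exact congrArg _ (funext fun k => map_natCast _ _)
  have hmapZMod : GeneralLinearGroup.map PadicInt.toZMod u = unipotentRowGL v := by
    rw [map_unipotentRowGL]
    exact congrArg _ (funext fun k => by
      rw [Function.comp_apply, map_natCast, ZMod.natCast_zmod_val])
  have := hv j
  rw [← hmapZMod, ← map_inv, ← map_mul, GeneralLinearGroup.map_apply,
    ← PadicInt.norm_lt_one_iff_toZMod_eq_zero] at this
  simp only [Int.cast_natCast]
  rwa [← hmapℚ, ← map_inv, ← map_mul, GeneralLinearGroup.map_apply]

end RowReduction

section CosetRepresentatives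

variable {p : ℕ} [Fact p.Prime] {n : ℕ}

lemma unipotentRowGL_intCast_mem_Iwahori (E : Fin n → ℤ) :
    unipotentRowGL (fun j => (E j : ℚ_[p])) ∈ Iwahori p (n + 1) := by
  refine (mem_Iwahori_iff _).2 ⟨unipotentRowGL fun j => (E j : ℤ_[p]), ?_, ?_⟩
  · rw [map_unipotentRowGL]
    exact congrArg _ (funext fun j => map_intCast _ _)
  · rw [map_unipotentRowGL, coe_unipotentRowGL]
    exact unipotentRow_isUpperTriangular _

lemma xGL_eq_unipotentRowGL_mul_dUp (E : Fin n → ℤ) :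
    xGL p n E = unipotentRowGL (fun j => (E j : ℚ_[p])) * dUp p n := by
  ext i j
  cases i using Fin.cases <;> cases j using Fin.cases <;>
    simp [xGL, xMat, dGL, mul_diagonal, one_apply, mul_comm, Fin.succ_ne_zero]

lemma xGL_inv_mul_xGL (E E' : Fin n → ℤ) :
    (xGL p n E')⁻¹ * xGL p n E =
      (dUp p n)⁻¹ * unipotentRowGL (fun j => ((E j - E' j : ℤ) : ℚ_[p])) * dUp p n := by
  rw [xGL_eq_unipotentRowGL_mul_dUp, xGL_eq_unipotentRowGL_mul_dUp, _root_.mul_inv_rev,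
    unipotentRowGL_inv, mul_assoc, ← mul_assoc (unipotentRowGL _), unipotentRowGL_mul,
    ← mul_assoc]
  congr 3
  ext j
  simp only [Pi.add_apply, Pi.neg_apply, Int.cast_sub]
  ring

lemma xGL_inv_mul_xGL_mem_Iwahori_iff (E E' : Fin n → ℤ) :
    (xGL p n E')⁻¹ * xGL p n E ∈ Iwahori p (n + 1) ↔ ∀ j, (p : ℤ) ∣ E j - E' j := by
  rw [xGL_inv_mul_xGL, dUp_conj_mem_Iwahori_iff (unipotentRowGL_intCast_mem_Iwahori _)]
  simp only [coe_unipotentRowGL, unipotentRow_zero_succ, Padic.norm_intCast_lt_one_iff]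

lemma exists_xGL_inv_mul_mem_Iwahori {a : GL (Fin (n + 1)) ℚ_[p]} (ha : a ∈ Iwahori p (n + 1)) :
    ∃ E : Fin n → ℤ, (∀ j, 0 ≤ E j ∧ E j < p) ∧
      (xGL p n E)⁻¹ * (a * dUp p n) ∈ Iwahori p (n + 1) := by
  obtain ⟨E, hE, hrow⟩ := exists_unipotentRowGL_inv_mul_norm_lt_one ha
  refine ⟨E, hE, ?_⟩
  have hu := (IwahoriSubgroup p (n + 1)).inv_mem (unipotentRowGL_intCast_mem_Iwahori (p := p) E)
  convert (dUp_conj_mem_Iwahori_iff ((IwahoriSubgroup p (n + 1)).mul_mem hu ha)).2 hrow using 1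
  rw [xGL_eq_unipotentRowGL_mul_dUp]
  group

end CosetRepresentatives

theorem Up_coset_decomposition_general (p : ℕ) [Fact p.Prime] (n : ℕ) :
    (Iwahori p (n + 1) * {dGL p (n + 1) (fun i => if i = 0 then 0 else -1)} *
          Iwahori p (n + 1)
        = ⋃ E ∈ {E : Fin n → ℤ | ∀ j, 0 ≤ E j ∧ E j < p},
            {xGL p n E} * Iwahori p (n + 1)) ∧
    ∀ E E' : Fin n → ℤ, (∀ j, 0 ≤ E j ∧ E j < p) → (∀ j, 0 ≤ E' j ∧ E' j < p) →
      E ≠ E' →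
        Disjoint ({xGL p n E} * Iwahori p (n + 1))
          ({xGL p n E'} * Iwahori p (n + 1)) := by
  let I := IwahoriSubgroup p (n + 1)
  refine ⟨Set.ext fun z => ⟨?_, ?_⟩, fun E E' hE hE' hne => ?_⟩
  · rintro ⟨_, ⟨a, ha, _, rfl, rfl⟩, b, hb, rfl⟩
    obtain ⟨E, hE, hmem⟩ := exists_xGL_inv_mul_mem_Iwahori ha
    exact Set.mem_biUnion hE ⟨_, rfl, _, I.mul_mem hmem hb, by group⟩
  · simp only [Set.mem_iUnion]
    rintro ⟨E, -, _, rfl, h, hh, rfl⟩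
    rw [xGL_eq_unipotentRowGL_mul_dUp]
    exact ⟨_, ⟨_, unipotentRowGL_intCast_mem_Iwahori E, _, rfl, rfl⟩, h, hh, rfl⟩
  · rw [Set.disjoint_left]
    rintro _ ⟨_, rfl, h, hh, rfl⟩ ⟨_, rfl, h', hh', heq⟩
    have hmem : (xGL p n E')⁻¹ * xGL p n E ∈ Iwahori p (n + 1) := by
      rw [eq_mul_inv_of_mul_eq heq.symm, mul_assoc, inv_mul_cancel_left]
      exact I.mul_mem hh' (I.inv_mem hh)
    refine hne (funext fun j => ?_)
    have hdvd := (xGL_inv_mul_xGL_mem_Iwahori_iff E E').1 hmem j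
    simpa [Int.emod_eq_of_lt (hE j).1 (hE j).2, Int.emod_eq_of_lt (hE' j).1 (hE' j).2]
      using (Int.modEq_iff_dvd.2 hdvd).eq.symm

/-- For `d = diag(1, p⁻¹, ..., p⁻¹) ∈ GL_{n+1}(ℚ_p)` (with `n ≥ 1`),
the Iwahori double coset `I d I` (underlying the Hecke operator `U_p`) is the union of
the right cosets `x_E I` for `E` ranging over `{0, 1, ..., p-1}ⁿ`, and these right
cosets are pairwise disjoint; in particular `I d I` is the disjoint union of exactly
`pⁿ` right `I`-cosets. -/
theorem Up_coset_decomposition (p : ℕ) [Fact p.Prime] (n : ℕ) (hn : 1 ≤ n) :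
    (Iwahori p (n + 1) * {dGL p (n + 1) (fun i => if i = 0 then 0 else -1)} *
          Iwahori p (n + 1)
        = ⋃ E ∈ {E : Fin n → ℤ | ∀ j, 0 ≤ E j ∧ E j < p},
            {xGL p n E} * Iwahori p (n + 1)) ∧
    ∀ E E' : Fin n → ℤ, (∀ j, 0 ≤ E j ∧ E j < p) → (∀ j, 0 ≤ E' j ∧ E' j < p) →
      E ≠ E' →
        Disjoint ({xGL p n E} * Iwahori p (n + 1))
          ({xGL p n E'} * Iwahori p (n + 1)) :=
  Up_coset_decomposition_general p n
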